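/- arXiv:0908.0916 — 3 statements merged into one kernel-verified Lean document; each statement's English description precedes it below -/
import Mathlib

section
/- For q ∈ k^× not a root of unity and n = 1 (the case 𝔤 = 𝔰𝔩₂), the half quantum group 𝒰^{≥0}, generated by E, K, K⁻¹ with relations KK⁻¹ = K⁻¹K = 1 and KEK⁻¹ = q²E, is not quasi-cocommutative: there is no invertible R ∈ 𝒰^{≥0} ⊗ 𝒰^{≥0} with Δ^op(h) = RΔ(h)R⁻¹ for all h. -/
/-!
In the PBW basis `E^m K^j ⊗ E^n K^l` of `𝒰^{≥0} ⊗ 𝒰^{≥0}`, the condition `Δᵒᵖ(E) R = R Δ(E)`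
reads `(1 ⊗ E + E ⊗ K) R = R (E ⊗ 1 + K ⊗ E)`. Take the basis vector in the support of `R`
that is largest for the lexicographic order on (total `E`-degree `m + n`, first `E`-degree `m`,
last `K`-exponent `l`). At `E^{m+1} K^j ⊗ E^n K^{l+1}` only `(E ⊗ K) R` has a nonzero coordinate,
namely `q^{2n}` times that leading coefficient, so that coefficient vanishes. Hence `R = 0`.
-/

theorem Finsupp.exists_ne_zero_forall_lt_imp_eq_zero {α β M : Type*} [LinearOrder β] [Zero M]
    {c : α →₀ M} (hc : c ≠ 0) (key : α → β) : ∃ p, c p ≠ 0 ∧ ∀ p', key p < key p' → c p' = 0 := by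
  obtain ⟨p, hp, hmax⟩ := c.support.exists_max_image key (support_nonempty_iff.mpr hc)
  exact ⟨p, mem_support_iff.mp hp, fun p' hlt ↦
    notMem_support_iff.mp fun hp' ↦ (hmax p' hp').not_gt hlt⟩

namespace Module.Basis

variable {ι R M : Type*} [CommSemiring R] [AddCommMonoid M] [Module R M] (b : Basis ι R M)
  {f : M →ₗ[R] M} {σ : ι → ι} {a : ι → R}

theorem repr_map_apply_of_map_basis (hf : ∀ i, f (b i) = a i • b (σ i)) (x : M) (j : ι) :
    b.repr (f x) j = ∑ i ∈ (b.repr x).support, b.repr x i * a i * Finsupp.single (σ i) 1 j := by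
  conv_lhs => rw [← b.linearCombination_repr x]
  simp only [Finsupp.linearCombination_apply, Finsupp.sum, map_sum, map_smul, hf, smul_smul,
    b.repr_self, Finsupp.finsetSum_apply, Finsupp.smul_apply, smul_eq_mul]

theorem repr_map_eq_zero (hf : ∀ i, f (b i) = a i • b (σ i)) (x : M) {j : ι}
    (hx : ∀ i, σ i = j → b.repr x i = 0) : b.repr (f x) j = 0 := by
  rw [b.repr_map_apply_of_map_basis hf]
  refine Finset.sum_eq_zero fun i _ => ?_
  by_cases h : σ i = j
  · rw [hx i h, zero_mul, zero_mul]
  · rw [Finsupp.single_eq_of_ne (Ne.symm h), mul_zero]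

theorem repr_map_apply_of_injective (hf : ∀ i, f (b i) = a i • b (σ i))
    (hσ : Function.Injective σ) (x : M) (i : ι) : b.repr (f x) (σ i) = b.repr x i * a i := by
  rw [b.repr_map_apply_of_map_basis hf, Finset.sum_eq_single i]
  · rw [Finsupp.single_eq_same, mul_one]
  · intro i' _ hne
    rw [Finsupp.single_eq_of_ne (hσ.ne hne).symm, mul_zero]
  · intro hi
    rw [Finsupp.notMem_support_iff.mp hi, zero_mul, zero_mul]

end Module.Basis

open TensorProduct

section PBW

variable {k H : Type*} [Field k] [Ring H] [Algebra k H] {u : k} {E : H} {K : Hˣ}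

def pbwMonomial (E : H) (K : Hˣ) (p : ℕ × ℤ) : H := E ^ p.1 * ((K ^ p.2 : Hˣ) : H)

theorem units_val_mul_pow_eq_smul (hKE : (K : H) * E = u • (E * K)) (n : ℕ) :
    (K : H) * E ^ n = u ^ n • (E ^ n * K) := by
  induction n with
  | zero => simp
  | succ n ih =>
    rw [pow_succ, ← mul_assoc, ih, smul_mul_assoc, mul_assoc, hKE, mul_smul_comm, smul_smul,
      ← pow_succ, ← mul_assoc, ← pow_succ]

theorem units_inv_mul_eq_smul (hu : u ≠ 0) (hKE : (K : H) * E = u • (E * K)) :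
    ((K⁻¹ : Hˣ) : H) * E = u⁻¹ • (E * ((K⁻¹ : Hˣ) : H)) := by
  apply (Units.mul_right_inj K).mp
  rw [Units.mul_inv_cancel_left, mul_smul_comm, ← mul_assoc, hKE, smul_mul_assoc, mul_assoc,
    Units.mul_inv, mul_one, inv_smul_smul₀ hu]

theorem units_zpow_mul_eq_smul (hu : u ≠ 0) (hKE : (K : H) * E = u • (E * K)) (j : ℤ) :
    ((K ^ j : Hˣ) : H) * E = u ^ j • (E * ((K ^ j : Hˣ) : H)) := by
  induction j using Int.induction_on with
  | zero => simp
  | succ i ih =>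
    rw [zpow_add_one, Units.val_mul, mul_assoc, hKE, mul_smul_comm, ← mul_assoc, ih,
      smul_mul_assoc, smul_smul, mul_comm u, ← zpow_add_one₀ hu, mul_assoc]
  | pred i ih =>
    rw [zpow_sub_one, Units.val_mul, mul_assoc, units_inv_mul_eq_smul hu hKE, mul_smul_comm,
      ← mul_assoc, ih, smul_mul_assoc, smul_smul, mul_comm u⁻¹, ← zpow_sub_one₀ hu, mul_assoc]

theorem mul_pbwMonomial (m : ℕ) (j : ℤ) :
    E * pbwMonomial E K (m, j) = pbwMonomial E K (m + 1, j) := by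
  rw [pbwMonomial, pbwMonomial, ← mul_assoc, ← pow_succ']

theorem units_val_mul_pbwMonomial (hKE : (K : H) * E = u • (E * K)) (m : ℕ) (j : ℤ) :
    (K : H) * pbwMonomial E K (m, j) = u ^ m • pbwMonomial E K (m, j + 1) := by
  rw [pbwMonomial, pbwMonomial, ← mul_assoc, units_val_mul_pow_eq_smul hKE, smul_mul_assoc,
    mul_assoc, add_comm j, zpow_add, zpow_one, Units.val_mul]

theorem pbwMonomial_mul (hu : u ≠ 0) (hKE : (K : H) * E = u • (E * K)) (m : ℕ) (j : ℤ) :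
    pbwMonomial E K (m, j) * E = u ^ j • pbwMonomial E K (m + 1, j) := by
  rw [pbwMonomial, pbwMonomial, mul_assoc, units_zpow_mul_eq_smul hu hKE, mul_smul_comm,
    ← mul_assoc, ← pow_succ]

theorem pbwMonomial_mul_units_val (m : ℕ) (j : ℤ) :
    pbwMonomial E K (m, j) * K = pbwMonomial E K (m, j + 1) := by
  rw [pbwMonomial, pbwMonomial, mul_assoc, zpow_add_one, Units.val_mul]

end PBW

section Rigidity

variable {k H : Type*} [Field k] [Ring H] [Algebra k H] {u : k} {E : H} {K : Hˣ}
  {B : Module.Basis (ℕ × ℤ) k H}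

theorem tensorProduct_apply_of_coe_eq_pbwMonomial (hB : ⇑B = pbwMonomial E K)
    (p : (ℕ × ℤ) × (ℕ × ℤ)) :
    B.tensorProduct B p = pbwMonomial E K p.1 ⊗ₜ pbwMonomial E K p.2 := by
  rw [B.tensorProduct_apply', hB]

theorem mulLeft_one_tmul_tensorProduct (hB : ⇑B = pbwMonomial E K) (p : (ℕ × ℤ) × (ℕ × ℤ)) :
    LinearMap.mulLeft k ((1 : H) ⊗ₜ[k] E) (B.tensorProduct B p) =
      (1 : k) • B.tensorProduct B (p.1, (p.2.1 + 1, p.2.2)) := by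
  rw [LinearMap.mulLeft_apply, tensorProduct_apply_of_coe_eq_pbwMonomial hB,
    tensorProduct_apply_of_coe_eq_pbwMonomial hB, Algebra.TensorProduct.tmul_mul_tmul, one_mul,
    mul_pbwMonomial, one_smul]

theorem mulLeft_tmul_units_val_tensorProduct (hKE : (K : H) * E = u • (E * K))
    (hB : ⇑B = pbwMonomial E K) (p : (ℕ × ℤ) × (ℕ × ℤ)) :
    LinearMap.mulLeft k (E ⊗ₜ[k] (K : H)) (B.tensorProduct B p) =
      u ^ p.2.1 • B.tensorProduct B ((p.1.1 + 1, p.1.2), (p.2.1, p.2.2 + 1)) := by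
  rw [LinearMap.mulLeft_apply, tensorProduct_apply_of_coe_eq_pbwMonomial hB,
    tensorProduct_apply_of_coe_eq_pbwMonomial hB, Algebra.TensorProduct.tmul_mul_tmul,
    mul_pbwMonomial, units_val_mul_pbwMonomial hKE, tmul_smul]

theorem mulRight_tmul_one_tensorProduct (hu : u ≠ 0) (hKE : (K : H) * E = u • (E * K))
    (hB : ⇑B = pbwMonomial E K) (p : (ℕ × ℤ) × (ℕ × ℤ)) :
    LinearMap.mulRight k (E ⊗ₜ[k] (1 : H)) (B.tensorProduct B p) =
      u ^ p.1.2 • B.tensorProduct B ((p.1.1 + 1, p.1.2), p.2) := by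
  rw [LinearMap.mulRight_apply, tensorProduct_apply_of_coe_eq_pbwMonomial hB,
    tensorProduct_apply_of_coe_eq_pbwMonomial hB, Algebra.TensorProduct.tmul_mul_tmul, mul_one,
    pbwMonomial_mul hu hKE, smul_tmul']

theorem mulRight_units_val_tmul_tensorProduct (hu : u ≠ 0) (hKE : (K : H) * E = u • (E * K))
    (hB : ⇑B = pbwMonomial E K) (p : (ℕ × ℤ) × (ℕ × ℤ)) :
    LinearMap.mulRight k ((K : H) ⊗ₜ[k] E) (B.tensorProduct B p) =
      u ^ p.2.2 • B.tensorProduct B ((p.1.1, p.1.2 + 1), (p.2.1 + 1, p.2.2)) := by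
  rw [LinearMap.mulRight_apply, tensorProduct_apply_of_coe_eq_pbwMonomial hB,
    tensorProduct_apply_of_coe_eq_pbwMonomial hB, Algebra.TensorProduct.tmul_mul_tmul,
    pbwMonomial_mul_units_val, pbwMonomial_mul hu hKE, tmul_smul]

theorem eq_zero_of_mul_eq_mul (hu : u ≠ 0) (hKE : (K : H) * E = u • (E * K))
    (hB : ⇑B = pbwMonomial E K) {X : H ⊗[k] H}
    (hX : (1 ⊗ₜ[k] E + E ⊗ₜ[k] (K : H)) * X = X * (E ⊗ₜ[k] (1 : H) + (K : H) ⊗ₜ[k] E)) :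
    X = 0 := by
  set T := B.tensorProduct B
  by_contra hX0
  let key (p : (ℕ × ℤ) × (ℕ × ℤ)) : ℕ ×ₗ ℕ ×ₗ ℤ := toLex (p.1.1 + p.2.1, toLex (p.1.1, p.2.2))
  obtain ⟨⟨⟨m, j⟩, n, l⟩, hlead, hzero⟩ :=
    Finsupp.exists_ne_zero_forall_lt_imp_eq_zero ((LinearEquiv.map_ne_zero_iff T.repr).mpr hX0) key
  have hcoord := congr(T.repr $hX ((m + 1, j), (n, l + 1)))
  simp only [add_mul, mul_add, map_add, Finsupp.add_apply] at hcoord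
  have e₁ : T.repr ((1 ⊗ₜ[k] E) * X) ((m + 1, j), (n, l + 1)) = 0 :=
    T.repr_map_eq_zero (mulLeft_one_tmul_tensorProduct hB) X fun ⟨⟨a, b⟩, c, d⟩ h ↦
      hzero _ <| by simp only [Prod.mk.injEq, key, Prod.Lex.toLex_lt_toLex] at h ⊢; omega
  have e₂ : T.repr ((E ⊗ₜ[k] (K : H)) * X) ((m + 1, j), (n, l + 1)) =
      T.repr X ((m, j), (n, l)) * u ^ n :=
    T.repr_map_apply_of_injective (mulLeft_tmul_units_val_tensorProduct hKE hB)
      (fun ⟨⟨a, b⟩, c, d⟩ ⟨⟨a', b'⟩, c', d'⟩ h ↦ by simp only [Prod.mk.injEq] at h ⊢; omega)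
      X ((m, j), (n, l))
  have e₃ : T.repr (X * (E ⊗ₜ[k] (1 : H))) ((m + 1, j), (n, l + 1)) = 0 :=
    T.repr_map_eq_zero (mulRight_tmul_one_tensorProduct hu hKE hB) X fun ⟨⟨a, b⟩, c, d⟩ h ↦
      hzero _ <| by simp only [Prod.mk.injEq, key, Prod.Lex.toLex_lt_toLex] at h ⊢; omega
  have e₄ : T.repr (X * ((K : H) ⊗ₜ[k] E)) ((m + 1, j), (n, l + 1)) = 0 :=
    T.repr_map_eq_zero (mulRight_units_val_tmul_tensorProduct hu hKE hB) X fun ⟨⟨a, b⟩, c, d⟩ h ↦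
      hzero _ <| by simp only [Prod.mk.injEq, key, Prod.Lex.toLex_lt_toLex] at h ⊢; omega
  rw [e₁, e₂, e₃, e₄, zero_add, add_zero, mul_eq_zero] at hcoord
  exact hcoord.elim hlead (pow_ne_zero n hu)

end Rigidity

open TensorProduct in
theorem stmt2_general {k : Type*} [Field k]
    {H : Type*} [Ring H] [HopfAlgebra k H]
    (q : k) (hq0 : q ≠ 0)
    (E : H) (K : Hˣ)
    (hrel : (K : H) * E = q ^ 2 • (E * (K : H)))
    (hb1 : LinearIndependent k (fun p : ℕ × ℤ => E ^ p.1 * ((K ^ p.2 : Hˣ) : H)))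
    (hb2 : Submodule.span k
      (Set.range fun p : ℕ × ℤ => E ^ p.1 * ((K ^ p.2 : Hˣ) : H)) = ⊤)
    (hΔE : Coalgebra.comul (R := k) E = E ⊗ₜ[k] (1 : H) + (K : H) ⊗ₜ[k] E) :
    ¬ ∃ R : H ⊗[k] H, IsUnit R ∧ ∀ h : H,
      (TensorProduct.comm k H H) (Coalgebra.comul (R := k) h) * R =
        R * Coalgebra.comul (R := k) h := by
  rintro ⟨R, hRu, hR⟩
  let B := Module.Basis.mk hb1 hb2.ge
  have hcomm :
      (1 ⊗ₜ[k] E + E ⊗ₜ[k] (K : H)) * R = R * (E ⊗ₜ[k] (1 : H) + (K : H) ⊗ₜ[k] E) := by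
    simpa only [hΔE, map_add, comm_tmul] using hR E
  have : Nontrivial H := ⟨⟨B default, 0, B.ne_zero default⟩⟩
  exact hRu.ne_zero
    (eq_zero_of_mul_eq_mul (pow_ne_zero 2 hq0) hrel (Module.Basis.coe_mk hb1 hb2.ge) hcomm)

open TensorProduct in
/-- the half quantum group `𝒰^{≥0}(𝔰𝔩₂)` (q not a root of unity) — a Hopf
algebra with generators `E`, `K^{±1}`, relation `K E K⁻¹ = q² E`, PBW basis
`{E^m K^j : m ∈ ℕ, j ∈ ℤ}`, `ΔE = E⊗1 + K⊗E`, `ΔK = K⊗K` — is not quasi-cocommutative: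
there is no invertible `R ∈ 𝒰^{≥0} ⊗ 𝒰^{≥0}` with `Δᵒᵖ(h) = R Δ(h) R⁻¹` for all `h`. -/
theorem stmt2 {k : Type*} [Field k] [IsAlgClosed k] [CharZero k]
    {H : Type*} [Ring H] [HopfAlgebra k H]
    (q : k) (hq0 : q ≠ 0) (hq1 : q ≠ 1) (hq2 : q ≠ -1)
    (hroot : ∀ n : ℕ, 0 < n → q ^ n ≠ 1)
    (E : H) (K : Hˣ)
    (hrel : (K : H) * E = q ^ 2 • (E * (K : H)))
    (hb1 : LinearIndependent k (fun p : ℕ × ℤ => E ^ p.1 * ((K ^ p.2 : Hˣ) : H)))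
    (hb2 : Submodule.span k
      (Set.range fun p : ℕ × ℤ => E ^ p.1 * ((K ^ p.2 : Hˣ) : H)) = ⊤)
    (hΔE : Coalgebra.comul (R := k) E = E ⊗ₜ[k] (1 : H) + (K : H) ⊗ₜ[k] E)
    (hΔK : Coalgebra.comul (R := k) (K : H) = (K : H) ⊗ₜ[k] (K : H)) :
    ¬ ∃ R : H ⊗[k] H, IsUnit R ∧ ∀ h : H,
      (TensorProduct.comm k H H) (Coalgebra.comul (R := k) h) * R =
        R * Coalgebra.comul (R := k) h :=
  stmt2_general q hq0 E K hrel hb1 hb2 hΔE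
end

section
/- For q not a root of unity, every Verma module M(σ) over 𝒰^{≥0}(𝔰𝔩₂) is a projective object in the category 𝒲 of weight modules: given weight modules M, L, a surjective morphism f : M → L and any morphism g : M(σ) → L in 𝒲, there exists a morphism φ : M(σ) → M with f∘φ = g. -/
/-- A module over the half quantum group `𝒰^{≥0}(𝔰𝔩₂) = k⟨E, K^{±1}⟩` with relation
`K E K⁻¹ = q² E`, presented as a vector space with operators `E`, `K`, `K⁻¹`. -/
structure HalfQModule (k : Type*) [Field k] (q : k) (V : Type*)
    [AddCommGroup V] [Module k V] where
  E : V →ₗ[k] V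
  K : V →ₗ[k] V
  Kinv : V →ₗ[k] V
  hK1 : K ∘ₗ Kinv = LinearMap.id
  hK2 : Kinv ∘ₗ K = LinearMap.id
  rel : K ∘ₗ E = q ^ 2 • (E ∘ₗ K)

variable {k : Type*} [Field k] {q : k}

/-- `(M, v)` is a Verma module of weight `σ`: `{E^m · v}` is a `k`-basis and
`K·(E^m·v) = q^{2m}σ E^m·v`. -/
def IsVerma {V : Type*} [AddCommGroup V] [Module k V] (σ : k)
    (M : HalfQModule k q V) (v : V) : Prop :=
  (∀ m : ℕ, M.K ((M.E ^ m) v) = (q ^ (2 * m) * σ) • ((M.E ^ m) v)) ∧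
  LinearIndependent k (fun m : ℕ => (M.E ^ m) v) ∧
  Submodule.span k (Set.range fun m : ℕ => (M.E ^ m) v) = ⊤

/-- A subspace invariant under the 𝒰^{≥0}-action, i.e. a submodule. -/
def Invt {V : Type*} [AddCommGroup V] [Module k V] (M : HalfQModule k q V)
    (p : Submodule k V) : Prop :=
  (∀ x ∈ p, M.E x ∈ p) ∧ (∀ x ∈ p, M.K x ∈ p) ∧ (∀ x ∈ p, M.Kinv x ∈ p)

/-- A homomorphism of 𝒰^{≥0}(𝔰𝔩₂)-modules. -/
def IsHom {V W : Type*} [AddCommGroup V] [Module k V] [AddCommGroup W] [Module k W]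
    (M : HalfQModule k q V) (N : HalfQModule k q W) (f : V →ₗ[k] W) : Prop :=
  f ∘ₗ M.E = N.E ∘ₗ f ∧ f ∘ₗ M.K = N.K ∘ₗ f

/-- A weight module: direct sum of the `K`-eigenspaces for `σ ∈ k^×`. -/
def IsWeight {V : Type*} [AddCommGroup V] [Module k V] (M : HalfQModule k q V) : Prop :=
  (⨆ σ : kˣ, LinearMap.ker (M.K - (σ : k) • LinearMap.id)) = ⊤

/-!
`g v_σ` is a vector of weight `σ` in `L`. As `f` commutes with `K` and `M` is the sum of its
`K`-eigenspaces, the image of `f` is the sum of the images of these eigenspaces; each lies in the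
corresponding eigenspace of `L`, and these are independent, so `g v_σ` is the image of a vector `w`
of weight `σ` in `M`. Since the `E^m v_σ` form a basis, sending `v_σ ↦ w` defines a module map
`φ`, and `f ∘ φ = g` because both are module maps agreeing on the generator `v_σ`.
-/

open Module End

lemma iSupIndep.inf_iSup_eq_of_le {ι α : Type*} [CompleteLattice α] [IsModularLattice α]
    {p p' : ι → α} (hp : iSupIndep p) (hp'p : p' ≤ p) (i : ι) :
    p i ⊓ ⨆ j, p' j = p' i := by
  have hdisj : (⨆ (j) (_ : j ≠ i), p' j) ⊓ p i = ⊥ :=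
    ((hp i).mono_right (iSup₂_mono fun j _ => hp'p j)).symm.eq_bot
  rw [iSup_split_single p' i, inf_comm, sup_inf_assoc_of_le _ (hp'p i), hdisj, sup_bot_eq]

section Eigenspaces

variable {R V L : Type*} [CommRing R] [AddCommGroup V] [Module R V] [AddCommGroup L] [Module R L]

lemma LinearMap.map_eigenspace_le_of_comp_eq {K : End R V} {K' : End R L} (f : V →ₗ[R] L)
    (hf : f ∘ₗ K = K' ∘ₗ f) (μ : R) : (eigenspace K μ).map f ≤ eigenspace K' μ := by
  rintro _ ⟨x, hx, rfl⟩
  rw [SetLike.mem_coe, mem_eigenspace_iff] at hx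
  rw [mem_eigenspace_iff, ← map_smul, ← hx, ← LinearMap.comp_apply (f := K'), ← hf,
    LinearMap.comp_apply]

lemma LinearMap.exists_mem_eigenspace_apply_eq [IsDomain R] [IsTorsionFree R L]
    {K : End R V} {K' : End R L} (f : V →ₗ[R] L) (hf : f ∘ₗ K = K' ∘ₗ f)
    (hK : ⨆ μ, eigenspace K μ = ⊤) {μ : R} {y : L} (hy : y ∈ eigenspace K' μ)
    (hyf : y ∈ LinearMap.range f) : ∃ w ∈ eigenspace K μ, f w = y := by
  have hrange : LinearMap.range f = ⨆ τ, (eigenspace K τ).map f := by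
    rw [← Submodule.map_iSup, hK]
    exact (Submodule.map_top f).symm
  have hy' : y ∈ eigenspace K' μ ⊓ LinearMap.range f := ⟨hy, hyf⟩
  rw [hrange, (eigenspaces_iSupIndep K').inf_iSup_eq_of_le
    (LinearMap.map_eigenspace_le_of_comp_eq f hf) μ] at hy'
  exact Submodule.mem_map.mp hy'

end Eigenspaces

section HalfQModules

variable {P V W : Type*} [AddCommGroup P] [Module k P] [AddCommGroup V] [Module k V]
  [AddCommGroup W] [Module k W]

lemma HalfQModule.K_E_pow_apply (M : HalfQModule k q V) {σ : k} {w : V} (hw : M.K w = σ • w)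
    (m : ℕ) : M.K ((M.E ^ m) w) = (q ^ (2 * m) * σ) • (M.E ^ m) w := by
  induction m with
  | zero => simpa using hw
  | succ n ih =>
    rw [pow_succ', mul_apply, ← LinearMap.comp_apply, M.rel, LinearMap.smul_apply,
      LinearMap.comp_apply, ih, map_smul, smul_smul]
    ring_nf

lemma IsWeight.iSup_eigenspace_eq_top {M : HalfQModule k q V} (hM : IsWeight M) :
    ⨆ μ, eigenspace M.K μ = ⊤ := by
  refine eq_top_iff.mpr (hM.symm.le.trans (iSup_le fun τ => le_iSup_of_le (τ : k) ?_))
  rw [eigenspace_def, one_eq_id]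

namespace IsHom

variable {MP : HalfQModule k q P} {M : HalfQModule k q V} {N : HalfQModule k q W}

lemma comp {f : V →ₗ[k] W} {φ : P →ₗ[k] V} (hf : IsHom M N f) (hφ : IsHom MP M φ) :
    IsHom MP N (f ∘ₗ φ) :=
  ⟨by rw [LinearMap.comp_assoc, hφ.1, ← LinearMap.comp_assoc, hf.1, LinearMap.comp_assoc],
    by rw [LinearMap.comp_assoc, hφ.2, ← LinearMap.comp_assoc, hf.2, LinearMap.comp_assoc]⟩

lemma map_E_pow_apply {f : V →ₗ[k] W} (hf : IsHom M N f) (x : V) (m : ℕ) :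
    f ((M.E ^ m) x) = (N.E ^ m) (f x) := by
  induction m with
  | zero => rfl
  | succ n ih => rw [pow_succ', mul_apply, ← LinearMap.comp_apply, hf.1, LinearMap.comp_apply,
      ih, ← mul_apply, ← pow_succ']

end IsHom

namespace IsVerma

variable {σ : k} {MP : HalfQModule k q P} {v : P}

lemma K_apply (h : IsVerma σ MP v) : MP.K v = σ • v := by
  simpa using h.1 0

lemma hom_ext (h : IsVerma σ MP v) {N : HalfQModule k q W} {φ ψ : P →ₗ[k] W}
    (hφ : IsHom MP N φ) (hψ : IsHom MP N ψ) (hv : φ v = ψ v) : φ = ψ :=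
  LinearMap.ext_on_range h.2.2 fun m => by rw [hφ.map_E_pow_apply, hψ.map_E_pow_apply, hv]

lemma exists_isHom_apply_eq (h : IsVerma σ MP v) (N : HalfQModule k q W) {w : W}
    (hw : N.K w = σ • w) : ∃ φ : P →ₗ[k] W, IsHom MP N φ ∧ φ v = w := by
  let b : Basis ℕ k P := .mk h.2.1 h.2.2.ge
  have hb (m : ℕ) : b m = (MP.E ^ m) v := Basis.mk_apply _ _ m
  let φ := b.constr k fun m => (N.E ^ m) w
  have hφ (m : ℕ) : φ ((MP.E ^ m) v) = (N.E ^ m) w := by rw [← hb, b.constr_basis]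
  refine ⟨φ, ⟨b.ext fun m => ?_, b.ext fun m => ?_⟩, by simpa using hφ 0⟩
  · simp only [LinearMap.comp_apply, hb]
    rw [← mul_apply, ← pow_succ', hφ, hφ, pow_succ', mul_apply]
  · simp only [LinearMap.comp_apply, hb]
    rw [h.1, map_smul, hφ, N.K_E_pow_apply hw]

end IsVerma

end HalfQModules

theorem stmt12_general {k : Type*} [Field k] (q : k) (σ : k)
    {P V L : Type*} [AddCommGroup P] [Module k P] [AddCommGroup V] [Module k V]
    [AddCommGroup L] [Module k L]
    (MP : HalfQModule k q P) (vσ : P) (hMP : IsVerma σ MP vσ)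
    (M : HalfQModule k q V) (Lm : HalfQModule k q L)
    (hMw : IsWeight M) (f : V →ₗ[k] L) (hf : IsHom M Lm f) (hfs : Function.Surjective f)
    (g : P →ₗ[k] L) (hg : IsHom MP Lm g) :
    ∃ φ : P →ₗ[k] V, IsHom MP M φ ∧ f ∘ₗ φ = g := by
  have hgv : g vσ ∈ eigenspace Lm.K σ := LinearMap.map_eigenspace_le_of_comp_eq g hg.2 σ
    (Submodule.mem_map_of_mem (mem_eigenspace_iff.mpr hMP.K_apply))
  obtain ⟨w, hw, hfw⟩ :=
    LinearMap.exists_mem_eigenspace_apply_eq f hf.2 hMw.iSup_eigenspace_eq_top hgv (hfs _)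
  obtain ⟨φ, hφ, hφv⟩ := hMP.exists_isHom_apply_eq M (mem_eigenspace_iff.mp hw)
  exact ⟨φ, hφ, hMP.hom_ext (hf.comp hφ) hg (by rw [LinearMap.comp_apply, hφv, hfw])⟩

/-- Verma modules are projective in the category 𝒲 of weight modules:
any morphism g : M(σ) → L lifts along a surjection f : M → L of weight modules. -/
theorem stmt12 {k : Type*} [Field k] (q : k) (hq0 : q ≠ 0)
    (hq : ∀ n : ℕ, 0 < n → q ^ n ≠ 1) (σ : k) (hσ : σ ≠ 0)
    {P V L : Type*} [AddCommGroup P] [Module k P] [AddCommGroup V] [Module k V]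
    [AddCommGroup L] [Module k L]
    (MP : HalfQModule k q P) (vσ : P) (hMP : IsVerma σ MP vσ)
    (M : HalfQModule k q V) (Lm : HalfQModule k q L)
    (hMw : IsWeight M) (hLw : IsWeight Lm)
    (f : V →ₗ[k] L) (hf : IsHom M Lm f) (hfs : Function.Surjective f)
    (g : P →ₗ[k] L) (hg : IsHom MP Lm g) :
    ∃ φ : P →ₗ[k] V, IsHom MP M φ ∧ f ∘ₗ φ = g :=
  stmt12_general q σ MP vσ hMP M Lm hMw f hf hfs g hg
end

section
/- For q not a root of unity, M(σ) ⊗ M(σ') ≅ M(σ') ⊗ M(σ) as 𝒰^{≥0}(𝔰𝔩₂)-modules for all σ, σ' ∈ k^×, even though 𝒰^{≥0} is not quasi-cocommutative. -/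
variable {k : Type*} [Field k] {q : k}

open TensorProduct in
/-- `T` is the tensor product module structure on `V ⊗ W` induced by the comultiplication
`ΔK = K⊗K`, `ΔE = E⊗1 + K⊗E` of `𝒰^{≥0}(𝔰𝔩₂)`. -/
def IsTensorStruct {V W : Type*} [AddCommGroup V] [Module k V] [AddCommGroup W] [Module k W]
    (A : HalfQModule k q V) (B : HalfQModule k q W) (T : HalfQModule k q (V ⊗[k] W)) : Prop :=
  T.K = TensorProduct.map A.K B.K ∧
  T.E = TensorProduct.map A.E LinearMap.id + TensorProduct.map A.K B.E

/-- The 1-dimensional module `V_σ`: `K` acts by `σ ∈ k^×`, `E` by `0`. -/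
def scalarMod (q : k) (σ : kˣ) : HalfQModule k q k where
  E := 0
  K := (σ : k) • LinearMap.id
  Kinv := ((σ⁻¹ : kˣ) : k) • LinearMap.id
  hK1 := by apply LinearMap.ext; intro x; simp [smul_smul]
  hK2 := by apply LinearMap.ext; intro x; simp [smul_smul]
  rel := by simp


/-! Write `x i j = E^i v ⊗ E^j w` for the tensor basis of `M(σ) ⊗ M(σ')`. Since
`E (x i j) = x (i+1) j + q^{2i}σ x i (j+1)`, the vector `E^r (v ⊗ E^m w)` equals `x r m` modulo
vectors `x i j` with `i < r`; this unitriangularity makes `{E^r (v ⊗ E^m w)}` a basis, on which `E`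
raises `r` and `K` acts by `q^{2(r+m)}σσ'`. The same holds for `M(σ') ⊗ M(σ)`, and both actions
depend on the weights only through `σσ'`, so matching the two bases is an isomorphism. -/

open TensorProduct Submodule

namespace HalfQModule

variable {V : Type*} [AddCommGroup V] [Module k V] (M : HalfQModule k q V)

lemma K_E_apply (x : V) : M.K (M.E x) = q ^ 2 • M.E (M.K x) := by
  simpa using LinearMap.ext_iff.mp M.rel x

lemma K_E_pow_apply_s17 (x : V) (r : ℕ) :
    M.K ((M.E ^ r) x) = q ^ (2 * r) • (M.E ^ r) (M.K x) := by
  induction r with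
  | zero => simp
  | succ r ih =>
    rw [pow_succ', Module.End.mul_apply, K_E_apply, ih, map_smul, smul_smul, ← pow_add,
      Module.End.mul_apply]
    ring_nf

end HalfQModule

section Unitriangular

variable {R M ι β : Type*} [Ring R] [AddCommGroup M] [Module R M] [LinearOrder β]
  (b : Module.Basis ι R M) (f : ι → β) {u : ι → M}

lemma Module.Basis.repr_apply_of_sub_mem_span_lt {i j : ι}
    (hu : u j - b j ∈ span R (b '' {l | f l < f j})) (hij : ¬ f i < f j) :
    b.repr (u j) i = Finsupp.single j 1 i := by
  have hzero : b.repr (u j - b j) i = 0 :=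
    Finsupp.notMem_support_iff.mp fun hi => hij ((b.mem_span_image.mp hu) hi)
  rwa [map_sub, Finsupp.sub_apply, b.repr_self, sub_eq_zero] at hzero

lemma linearIndependent_of_sub_mem_span_lt
    (hu : ∀ i, u i - b i ∈ span R (b '' {j | f j < f i})) : LinearIndependent R u := by
  rw [linearIndependent_iff]
  intro l hl
  by_contra hne
  obtain ⟨i, hi, hmax⟩ := l.support.exists_max_image f (Finsupp.support_nonempty_iff.mpr hne)
  -- Maximality of `f i` leaves only `u i` with a nonzero `i`-th coordinate.
  have hcoord : b.repr (Finsupp.linearCombination R u l) i = l i := by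
    rw [Finsupp.linearCombination_apply, Finsupp.sum, map_sum, Finsupp.finsetSum_apply,
      Finset.sum_eq_single i]
    · simp [b.repr_apply_of_sub_mem_span_lt f (hu i) (lt_irrefl _)]
    · intro j hj hji
      simp [b.repr_apply_of_sub_mem_span_lt f (hu j) (hmax j hj).not_gt, hji]
    · exact fun h => (h hi).elim
  rw [hl, map_zero, Finsupp.zero_apply] at hcoord
  exact Finsupp.mem_support_iff.mp hi hcoord.symm

lemma span_eq_top_of_sub_mem_span_lt [WellFoundedLT β]
    (hu : ∀ i, u i - b i ∈ span R (b '' {j | f j < f i})) : span R (Set.range u) = ⊤ := by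
  have hb : ∀ x : β, ∀ i, f i = x → b i ∈ span R (Set.range u) := by
    intro x
    induction x using WellFoundedLT.induction with
    | _ x ih =>
      rintro i rfl
      have hlower : span R (b '' {j | f j < f i}) ≤ span R (Set.range u) :=
        span_le.mpr <| by
          rintro _ ⟨j, hj, rfl⟩
          exact ih (f j) hj j rfl
      simpa using sub_mem (subset_span (Set.mem_range_self i)) (hlower (hu i))
  rw [eq_top_iff, ← b.span_eq, span_le]
  rintro _ ⟨i, rfl⟩
  exact hb _ i rfl

end Unitriangular

section Tensor

variable {V W : Type*} [AddCommGroup V] [Module k V] [AddCommGroup W] [Module k W]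

noncomputable def IsVerma.basis {σ : k} {M : HalfQModule k q V} {v : V} (h : IsVerma σ M v) :
    Module.Basis ℕ k V :=
  Module.Basis.mk h.2.1 h.2.2.ge

@[simp]
lemma IsVerma.basis_apply {σ : k} {M : HalfQModule k q V} {v : V} (h : IsVerma σ M v) (m : ℕ) :
    h.basis m = (M.E ^ m) v :=
  Module.Basis.mk_apply _ _ _

variable {A : HalfQModule k q V} {B : HalfQModule k q W} {T : HalfQModule k q (V ⊗[k] W)}

lemma IsTensorStruct.K_tmul (hT : IsTensorStruct A B T) (x : V) (y : W) :
    T.K (x ⊗ₜ y) = A.K x ⊗ₜ B.K y := by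
  simp [hT.1]

lemma IsTensorStruct.E_tmul (hT : IsTensorStruct A B T) (x : V) (y : W) :
    T.E (x ⊗ₜ y) = A.E x ⊗ₜ y + A.K x ⊗ₜ B.E y := by
  simp [hT.2]

variable {σ σ' : k} {v : V} {w : W}

lemma IsTensorStruct.E_tmul_E_pow (hT : IsTensorStruct A B T) (hA : IsVerma σ A v) (i j : ℕ) :
    T.E ((A.E ^ i) v ⊗ₜ (B.E ^ j) w) =
      (A.E ^ (i + 1)) v ⊗ₜ (B.E ^ j) w + (q ^ (2 * i) * σ) • (A.E ^ i) v ⊗ₜ (B.E ^ (j + 1)) w := by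
  rw [hT.E_tmul, hA.1, smul_tmul', pow_succ', pow_succ', Module.End.mul_apply,
    Module.End.mul_apply]

lemma IsTensorStruct.E_pow_tmul_sub_mem_span (hT : IsTensorStruct A B T) (hA : IsVerma σ A v)
    (hB : IsVerma σ' B w) (r m : ℕ) :
    (T.E ^ r) (v ⊗ₜ (B.E ^ m) w) - hA.basis.tensorProduct hB.basis (r, m) ∈
      span k (hA.basis.tensorProduct hB.basis '' {p | p.1 < r}) := by
  set b := hA.basis.tensorProduct hB.basis
  have hb : ∀ p : ℕ × ℕ, b p = (A.E ^ p.1) v ⊗ₜ (B.E ^ p.2) w := fun p => by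
    simp [b, Module.Basis.tensorProduct_apply']
  have hmem : ∀ {p : ℕ × ℕ} {r : ℕ}, p.1 < r → b p ∈ span k (b '' {p | p.1 < r}) :=
    fun hp => subset_span (Set.mem_image_of_mem b hp)
  have hE : ∀ r, span k (b '' {p | p.1 < r}) ≤ (span k (b '' {p | p.1 < r + 1})).comap T.E := by
    intro r
    refine span_le.mpr ?_
    rintro _ ⟨⟨i, j⟩, hi, rfl⟩
    change i < r at hi
    rw [SetLike.mem_coe, mem_comap, hb, hT.E_tmul_E_pow hA, ← hb (i + 1, j), ← hb (i, j + 1)]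
    exact add_mem (hmem (by simpa using hi)) (smul_mem _ _ (hmem (by simp; omega)))
  induction r with
  | zero => simp [hb]
  | succ r ih =>
    have hstep : (T.E ^ (r + 1)) (v ⊗ₜ (B.E ^ m) w) - b (r + 1, m) =
        T.E ((T.E ^ r) (v ⊗ₜ (B.E ^ m) w) - b (r, m)) +
          (q ^ (2 * r) * σ) • (A.E ^ r) v ⊗ₜ (B.E ^ (m + 1)) w := by
      rw [map_sub, hb, hb, hT.E_tmul_E_pow hA, pow_succ' T.E, Module.End.mul_apply]
      abel
    rw [hstep, ← hb (r, m + 1)]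
    exact add_mem (hE r ih) (smul_mem _ _ (hmem (by simp)))

noncomputable def IsTensorStruct.basis (hT : IsTensorStruct A B T) (hA : IsVerma σ A v)
    (hB : IsVerma σ' B w) : Module.Basis (ℕ × ℕ) k (V ⊗[k] W) :=
  have hu := fun p : ℕ × ℕ => hT.E_pow_tmul_sub_mem_span hA hB p.1 p.2
  Module.Basis.mk (linearIndependent_of_sub_mem_span_lt _ Prod.fst hu)
    (span_eq_top_of_sub_mem_span_lt _ Prod.fst hu).ge

@[simp]
lemma IsTensorStruct.basis_apply (hT : IsTensorStruct A B T) (hA : IsVerma σ A v)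
    (hB : IsVerma σ' B w) (r m : ℕ) :
    hT.basis hA hB (r, m) = (T.E ^ r) (v ⊗ₜ (B.E ^ m) w) := by
  simp [IsTensorStruct.basis]

lemma IsTensorStruct.E_basis (hT : IsTensorStruct A B T) (hA : IsVerma σ A v)
    (hB : IsVerma σ' B w) (r m : ℕ) :
    T.E (hT.basis hA hB (r, m)) = hT.basis hA hB (r + 1, m) := by
  simp [pow_succ']

lemma IsTensorStruct.K_basis (hT : IsTensorStruct A B T) (hA : IsVerma σ A v)
    (hB : IsVerma σ' B w) (r m : ℕ) :
    T.K (hT.basis hA hB (r, m)) = (q ^ (2 * (r + m)) * (σ * σ')) • hT.basis hA hB (r, m) := by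
  have hv : A.K v = σ • v := by simpa using hA.1 0
  rw [basis_apply, T.K_E_pow_apply_s17, hT.K_tmul, hv, hB.1, smul_tmul_smul, map_smul, smul_smul]
  ring_nf

end Tensor

lemma isHom_basis_equiv {ι X Y : Type*} [AddCommGroup X] [Module k X] [AddCommGroup Y]
    [Module k Y] {TX : HalfQModule k q X} {TY : HalfQModule k q Y}
    (bX : Module.Basis ι k X) (bY : Module.Basis ι k Y) (s : ι → ι) (c : ι → k)
    (hEX : ∀ i, TX.E (bX i) = bX (s i)) (hEY : ∀ i, TY.E (bY i) = bY (s i))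
    (hKX : ∀ i, TX.K (bX i) = c i • bX i) (hKY : ∀ i, TY.K (bY i) = c i • bY i) :
    IsHom TX TY (bX.equiv bY (Equiv.refl ι) : X →ₗ[k] Y) := by
  constructor <;> refine bX.ext fun i => ?_ <;> simp [hEX, hEY, hKX, hKY]

open TensorProduct in
theorem stmt17_general {k : Type*} [Field k] (q : k) (σ σ' : k)
    {V W : Type*} [AddCommGroup V] [Module k V] [AddCommGroup W] [Module k W]
    (A : HalfQModule k q V) (v : V) (hA : IsVerma σ A v)
    (B : HalfQModule k q W) (w : W) (hB : IsVerma σ' B w)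
    (T : HalfQModule k q (V ⊗[k] W)) (hT : IsTensorStruct A B T)
    (T' : HalfQModule k q (W ⊗[k] V)) (hT' : IsTensorStruct B A T') :
    ∃ f : (V ⊗[k] W) ≃ₗ[k] (W ⊗[k] V),
      IsHom T T' (f : (V ⊗[k] W) →ₗ[k] (W ⊗[k] V)) :=
  ⟨_, isHom_basis_equiv (hT.basis hA hB) (hT'.basis hB hA) (fun p => (p.1 + 1, p.2))
    (fun p => q ^ (2 * (p.1 + p.2)) * (σ * σ'))
    (fun p => hT.E_basis hA hB p.1 p.2) (fun p => hT'.E_basis hB hA p.1 p.2)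
    (fun p => hT.K_basis hA hB p.1 p.2)
    (fun p => by rw [hT'.K_basis hB hA, mul_comm σ'])⟩

open TensorProduct in
/-- `M(σ) ⊗ M(σ') ≅ M(σ') ⊗ M(σ)` as 𝒰^{≥0}(𝔰𝔩₂)-modules. -/
theorem stmt17 {k : Type*} [Field k] (q : k) (hq0 : q ≠ 0)
    (hq : ∀ n : ℕ, 0 < n → q ^ n ≠ 1) (σ σ' : k) (hσ : σ ≠ 0) (hσ' : σ' ≠ 0)
    {V W : Type*} [AddCommGroup V] [Module k V] [AddCommGroup W] [Module k W]
    (A : HalfQModule k q V) (v : V) (hA : IsVerma σ A v)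
    (B : HalfQModule k q W) (w : W) (hB : IsVerma σ' B w)
    (T : HalfQModule k q (V ⊗[k] W)) (hT : IsTensorStruct A B T)
    (T' : HalfQModule k q (W ⊗[k] V)) (hT' : IsTensorStruct B A T') :
    ∃ f : (V ⊗[k] W) ≃ₗ[k] (W ⊗[k] V),
      IsHom T T' (f : (V ⊗[k] W) →ₗ[k] (W ⊗[k] V)) :=
  stmt17_general q σ σ' A v hA B w hB T hT T' hT'
end
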